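/- Define, for t > 1, x(t) = t^{-3/2}, y(t) = (1 - 2t^{-3/2})·exp(t^{3/2}), z(t) = (1 + 2t^{-3/2})·exp(-t^{3/2}). Then the triple (x, y, z) satisfies the Tzitzeica curve equation with constant α = 1/2: W(x',y',z')(t) = (1/2) · (W(x,y,z)(t))² for all t > 1. -/

import Mathlib

/-!
Put `u = t^{3/2}`, so that `u' = (3/2) u / t`. The coordinates are `q(u) e^{cu} t^{-3/2}` with
`(q, c) = (1, 0), (X - 2, 1), (X + 2, -1)`, and differentiating `q(u) e^{cu} t^a` gives a function
of the same shape, with `a` lowered by one and `q` replaced by `(3/2) X (q' + c q) + a q`. Hence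
both Wronskians are explicit determinants in `u`, `t` and `e^u`. The exponentials cancel, since
every term of a determinant takes one entry from the `y`-column and one from the `z`-column, and
what is left is an identity of rational functions.
-/

/-- The Wronskian of three functions `x, y, z : ℝ → ℝ`. -/
noncomputable def W3 (x y z : ℝ → ℝ) (t : ℝ) : ℝ :=
  Matrix.det !![x t, y t, z t;
    deriv x t, deriv y t, deriv z t;
    deriv (deriv x) t, deriv (deriv y) t, deriv (deriv z) t]

noncomputable def xT : ℝ → ℝ := fun t => t ^ (-(3 : ℝ) / 2)
noncomputable def yT : ℝ → ℝ := fun t =>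
  (1 - 2 * t ^ (-(3 : ℝ) / 2)) * Real.exp (t ^ ((3 : ℝ) / 2))
noncomputable def zT : ℝ → ℝ := fun t =>
  (1 + 2 * t ^ (-(3 : ℝ) / 2)) * Real.exp (-(t ^ ((3 : ℝ) / 2)))

open Real Set Polynomial

noncomputable def polyExpRpow (c : ℝ) (q : ℝ[X]) (a : ℝ) (t : ℝ) : ℝ :=
  q.eval (t ^ (3 / 2 : ℝ)) * exp (c * t ^ (3 / 2 : ℝ)) * t ^ a

noncomputable def derivPoly (c a : ℝ) (q : ℝ[X]) : ℝ[X] :=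
  C (3 / 2) * X * (derivative q + C c * q) + C a * q

noncomputable def iterDerivPoly (c a : ℝ) (q : ℝ[X]) : ℕ → ℝ[X]
  | 0 => q
  | k + 1 => derivPoly c (a - k) (iterDerivPoly c a q k)

noncomputable def polyExpRpowJet (c a : ℝ) (q : ℝ[X]) (t : ℝ) (k : ℕ) : ℝ :=
  polyExpRpow c (iterDerivPoly c a q k) (a - k) t

theorem hasDerivAt_polyExpRpow (c : ℝ) (q : ℝ[X]) (a : ℝ) {t : ℝ} (ht : 0 < t) :
    HasDerivAt (polyExpRpow c q a) (polyExpRpow c (derivPoly c a q) (a - 1) t) t := by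
  have hu : HasDerivAt (fun t : ℝ => t ^ (3 / 2 : ℝ)) (3 / 2 * t ^ (3 / 2 - 1 : ℝ)) t :=
    hasDerivAt_rpow_const (Or.inl ht.ne')
  refine HasDerivAt.congr_deriv (f := polyExpRpow c q a)
    ((((q.hasDerivAt _).comp t hu).mul (hu.const_mul c).exp).mul
      (hasDerivAt_rpow_const (p := a) (Or.inl ht.ne'))) ?_
  simp only [polyExpRpow, derivPoly, eval_add, eval_mul, eval_C, eval_X, Function.comp_apply,
    Pi.mul_apply, rpow_sub_one ht.ne']
  field_simp

theorem eqOn_iterate_deriv_polyExpRpow {f : ℝ → ℝ} {c a : ℝ} {q : ℝ[X]}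
    (hf : EqOn f (polyExpRpow c q a) (Ioi 0)) (k : ℕ) :
    EqOn (deriv^[k] f) (polyExpRpow c (iterDerivPoly c a q k) (a - k)) (Ioi 0) := by
  induction k with
  | zero => simpa [iterDerivPoly] using hf
  | succ k ih =>
    intro t ht
    rw [Function.iterate_succ_apply', ih.deriv isOpen_Ioi ht,
      (hasDerivAt_polyExpRpow c _ _ ht).deriv]
    simp [iterDerivPoly, sub_sub]

theorem xT_eq_polyExpRpow : xT = polyExpRpow 0 1 (-3 / 2) := by
  ext t
  simp [xT, polyExpRpow]

theorem yT_eqOn_polyExpRpow : EqOn yT (polyExpRpow 1 (X - C 2) (-3 / 2)) (Ioi 0) := by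
  intro t (ht : 0 < t)
  simp only [yT, polyExpRpow, eval_sub, eval_X, eval_C, one_mul, neg_div, rpow_neg ht.le]
  have : t ^ (3 / 2 : ℝ) ≠ 0 := (rpow_pos_of_pos ht _).ne'
  field_simp

theorem zT_eqOn_polyExpRpow : EqOn zT (polyExpRpow (-1) (X + C 2) (-3 / 2)) (Ioi 0) := by
  intro t (ht : 0 < t)
  simp only [zT, polyExpRpow, eval_add, eval_X, eval_C, neg_one_mul, neg_div, rpow_neg ht.le]
  have : t ^ (3 / 2 : ℝ) ≠ 0 := (rpow_pos_of_pos ht _).ne'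
  field_simp

noncomputable def jetWronskian (F G H : ℕ → ℝ) (j : ℕ) : ℝ :=
  !![F j, G j, H j; F (j + 1), G (j + 1), H (j + 1); F (j + 2), G (j + 2), H (j + 2)].det

theorem W3_iterate_deriv (f g h : ℝ → ℝ) (t : ℝ) (j : ℕ) :
    W3 (deriv^[j] f) (deriv^[j] g) (deriv^[j] h) t =
      jetWronskian (deriv^[·] f t) (deriv^[·] g t) (deriv^[·] h t) j := by
  simp only [W3, jetWronskian, Function.iterate_succ_apply']

theorem jetWronskian_tzitzeica {t : ℝ} (ht : 0 < t) :
    jetWronskian (polyExpRpowJet 0 (-3 / 2) 1 t) (polyExpRpowJet 1 (-3 / 2) (X - C 2) t)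
      (polyExpRpowJet (-1) (-3 / 2) (X + C 2) t) 1 =
    1 / 2 * jetWronskian (polyExpRpowJet 0 (-3 / 2) 1 t) (polyExpRpowJet 1 (-3 / 2) (X - C 2) t)
      (polyExpRpowJet (-1) (-3 / 2) (X + C 2) t) 0 ^ 2 := by
  have hpow (k : ℕ) : t ^ (-3 / 2 - k : ℝ) = (t ^ (3 / 2 : ℝ))⁻¹ / t ^ k := by
    rw [rpow_sub ht, rpow_natCast, neg_div, rpow_neg ht.le]
  simp only [jetWronskian, polyExpRpowJet, polyExpRpow, hpow]
  simp only [Matrix.det_fin_three, Matrix.of_apply, Matrix.cons_val', Matrix.cons_val_zero,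
    Matrix.cons_val_one, Matrix.cons_val, Matrix.cons_val_fin_one, iterDerivPoly, derivPoly,
    derivative_mul, derivative_add, derivative_sub, derivative_X, derivative_C, derivative_one,
    derivative_zero, eval_add, eval_mul, eval_sub, eval_C, eval_X, eval_one, eval_zero,
    Nat.cast_ofNat, Nat.cast_one, Nat.cast_zero, zero_mul, exp_zero, exp_neg, neg_mul, one_mul]
  have hu : t ^ (3 / 2 : ℝ) ≠ 0 := (rpow_pos_of_pos ht _).ne'
  field_simp
  ring

theorem stmt_16 :
    ∀ t : ℝ, 1 < t →
      W3 (deriv xT) (deriv yT) (deriv zT) t = (1 / 2) * (W3 xT yT zT t) ^ 2 := by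
  intro t ht
  have ht0 : t ∈ Ioi 0 := zero_lt_one.trans ht
  have jet {f c q} (hf : EqOn f (polyExpRpow c q (-3 / 2)) (Ioi 0)) :
      (deriv^[·] f t) = polyExpRpowJet c (-3 / 2) q t :=
    funext fun k => eqOn_iterate_deriv_polyExpRpow hf k ht0
  show W3 (deriv^[1] xT) (deriv^[1] yT) (deriv^[1] zT) t =
    1 / 2 * W3 (deriv^[0] xT) (deriv^[0] yT) (deriv^[0] zT) t ^ 2
  rw [W3_iterate_deriv, W3_iterate_deriv, jet fun s _ => congrFun xT_eq_polyExpRpow s,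
    jet yT_eqOn_polyExpRpow, jet zT_eqOn_polyExpRpow]
  exact jetWronskian_tzitzeica ht0
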